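/- Let (Z_n) be a Galton-Watson process with Z_0 = 1 and offspring distribution with mean m ≠ 1 and variance s². Then the partial sum T_R = ∑_{n=0}^{R} Z_n satisfies E(T_R²) = (s²/(1-m)²)·((1 - m^{2R+1})/(1-m) - (2R+1)·m^R) + ((1 - m^{R+1})/(1-m))². -/

import Mathlib

/-!
Write `T_n = Z_0 + ⋯ + Z_n`. Everything measurable with respect to the offspring numbers of
generations `< n` (in particular `Z_n` and `T_n`) is independent of generation `n`'s offspring
numbers, so `E[Y Z_{n+1}] = m E[Y Z_n]` for such `Y`, and splitting `Z_{n+1}²` into diagonal and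
off-diagonal products gives `E[Z_{n+1}²] = s² E[Z_n] + m² E[Z_n²]`. Hence `b_n = E[Z_n²]`,
`t_n = E[T_n Z_n]` and `q_n = E[T_n²]` satisfy the linear recurrences
`b_{n+1} = m² b_n + s² mⁿ`, `t_{n+1} = m t_n + b_{n+1}`, `q_{n+1} = q_n + 2m t_n + b_{n+1}`,
whose solution is the closed form. The random sums are handled in `ℝ≥0∞`, where they commute
with integration; finiteness of `E[Z_n²]` then transfers the identities to `ℝ`.
-/

open MeasureTheory ProbabilityTheory Finset
open scoped ENNReal

section Independence

variable {Ω ι β : Type*} {mΩ : MeasurableSpace Ω} [MeasurableSpace β] {X : ι → Ω → β}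

abbrev sigmaOf (X : ι → Ω → β) (T : Set ι) : MeasurableSpace Ω :=
  ⨆ j ∈ T, MeasurableSpace.comap (X j) ‹MeasurableSpace β›

theorem sigmaOf_le (hX : ∀ j, Measurable (X j)) (T : Set ι) : sigmaOf X T ≤ mΩ :=
  iSup₂_le fun j _ => (hX j).comap_le

theorem sigmaOf_mono {T₁ T₂ : Set ι} (h : T₁ ⊆ T₂) : sigmaOf X T₁ ≤ sigmaOf X T₂ :=
  biSup_mono h

theorem measurable_sigmaOf {T : Set ι} {j : ι} (hj : j ∈ T) : Measurable[sigmaOf X T] (X j) :=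
  Measurable.of_comap_le <| le_iSup₂ (f := fun j (_ : j ∈ T) => MeasurableSpace.comap (X j) _) j hj

theorem lintegral_comp_mul_eq_of_iIndepFun {P : Measure Ω} (hX : ∀ j, Measurable (X j))
    (hind : iIndepFun X P) {T : Set ι} {i : ι} (hi : i ∉ T) {g : β → ℝ≥0∞} (hg : Measurable g)
    {Y : Ω → ℝ≥0∞} (hY : Measurable[sigmaOf X T] Y) :
    ∫⁻ ω, g (X i ω) * Y ω ∂P = (∫⁻ ω, g (X i ω) ∂P) * ∫⁻ ω, Y ω ∂P := by
  have hindep : Indep (MeasurableSpace.comap (X i) ‹_›) (sigmaOf X T) P := by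
    simpa using indep_iSup_of_disjoint (fun j => (hX j).comap_le) hind.iIndep
      (Set.disjoint_singleton_left.mpr hi)
  exact lintegral_mul_eq_lintegral_mul_lintegral_of_independent_measurableSpace
    (hX i).comap_le (sigmaOf_le hX T) hindep (hg.comp (comap_measurable (X i))) hY

end Independence

theorem Measurable.sum_range_random {Ω M : Type*} {mΩ : MeasurableSpace Ω} [AddCommMonoid M]
    [MeasurableSpace M] [MeasurableAdd₂ M] {N : Ω → ℕ} (hN : Measurable N) {x : ℕ → Ω → M}
    (hx : ∀ i, Measurable (x i)) : Measurable fun ω => ∑ i ∈ range (N ω), x i ω :=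
  (measurable_from_prod_countable_left (f := fun p : Ω × ℕ => ∑ i ∈ range p.2, x i p.1)
    fun j => Finset.measurable_sum (range j) fun i _ => hx i).comp (measurable_id.prodMk hN)

section Sums

theorem tsum_ite_mem {β M : Type*} [DecidableEq β] [AddCommMonoid M] [TopologicalSpace M]
    (s : Finset β) (f : β → M) : ∑' x, (if x ∈ s then f x else 0) = ∑ x ∈ s, f x := by
  rw [tsum_eq_sum fun x hx => if_neg hx]
  exact sum_congr rfl fun x hx => if_pos hx

theorem sq_sum_range_eq_tsum (z : ℕ) (x : ℕ → ℝ≥0∞) :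
    (∑ i ∈ range z, x i) ^ 2
      = ∑' p : ℕ × ℕ, x p.1 * x p.2 * (if p ∈ range z ×ˢ range z then 1 else 0) := by
  rw [sq, sum_mul_sum, ← sum_product', ← tsum_ite_mem]
  refine tsum_congr fun p => ?_
  split_ifs <;> simp

theorem sum_range_product_ite_add {R : Type*} [CommSemiring R] (z : ℕ) (a b : R) :
    ∑ p ∈ range z ×ˢ range z, (if p.1 = p.2 then a else b) + z * b = z * a + z ^ 2 * b := by
  have hrow : ∀ i ∈ range z, ∑ j ∈ range z, (if i = j then a else b) + b = a + z * b := by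
    intro i hi
    rw [sum_ite, filter_eq, if_pos hi, filter_ne, sum_const, sum_const, card_singleton,
      card_erase_of_mem hi, card_range, one_smul, nsmul_eq_mul, add_assoc, ← add_one_mul,
      ← Nat.cast_add_one, Nat.sub_add_cancel (Nat.one_le_of_lt (mem_range.mp hi))]
  calc ∑ p ∈ range z ×ˢ range z, (if p.1 = p.2 then a else b) + z * b
      = ∑ i ∈ range z, (∑ j ∈ range z, (if i = j then a else b) + b) := by
        rw [sum_product, sum_add_distrib, sum_const, card_range, nsmul_eq_mul]
    _ = z * a + z ^ 2 * b := by
        rw [sum_congr rfl hrow, sum_const, card_range, nsmul_eq_mul]; ring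

end Sums

section NatValued

variable {Ω : Type*} [MeasurableSpace Ω] {P : Measure Ω} {X : Ω → ℕ}

theorem integral_natCast_eq_toReal_lintegral (hX : Measurable X) :
    ∫ ω, (X ω : ℝ) ∂P = (∫⁻ ω, (X ω : ℝ≥0∞) ∂P).toReal := by
  rw [← integral_toReal (f := fun ω => (X ω : ℝ≥0∞)) (by fun_prop)
    (ae_of_all _ fun _ => ENNReal.natCast_lt_top _)]
  simp

theorem lintegral_natCast_le_lintegral_sq (X : Ω → ℕ) :
    ∫⁻ ω, (X ω : ℝ≥0∞) ∂P ≤ ∫⁻ ω, (X ω : ℝ≥0∞) ^ 2 ∂P :=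
  lintegral_mono fun ω => by
    rw [← Nat.cast_pow]; exact Nat.cast_le.2 (Nat.le_self_pow two_ne_zero _)

theorem memLp_two_natCast (hX : Measurable X) (hX2 : ∫⁻ ω, (X ω : ℝ≥0∞) ^ 2 ∂P ≠ ⊤) :
    MemLp (fun ω => (X ω : ℝ)) 2 P := by
  refine (memLp_two_iff_integrable_sq (by fun_prop)).2 ?_
  simpa using integrable_toReal_of_lintegral_ne_top (by fun_prop) hX2

end NatValued

/- The invariants are multiplied through by powers of `1 - m` and track `m t_n` instead of `t_n`,
so that they are polynomial identities, valid also at `m = 0`. -/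
theorem progeny_moments_eq_of_recurrence {m s2 : ℝ} (hm1 : m ≠ 1) {b t q : ℕ → ℝ}
    (hb0 : b 0 = 1) (hb : ∀ n, b (n + 1) = m ^ 2 * b n + s2 * m ^ n)
    (ht0 : t 0 = 1) (ht : ∀ n, t (n + 1) = m * t n + b (n + 1))
    (hq0 : q 0 = 1) (hq : ∀ n, q (n + 1) = q n + 2 * m * t n + b (n + 1)) (n : ℕ) :
    q n = s2 / (1 - m) ^ 2 * ((1 - m ^ (2 * n + 1)) / (1 - m) - (2 * (n : ℝ) + 1) * m ^ n)
      + ((1 - m ^ (n + 1)) / (1 - m)) ^ 2 := by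
  have hb_closed : ∀ n, b (n + 1) * (1 - m)
      = m ^ (2 * n + 2) * (1 - m) + s2 * m ^ n * (1 - m ^ (n + 1)) := by
    intro n
    induction n with
    | zero => rw [hb, hb0]; ring
    | succ n ih => rw [hb]; linear_combination m ^ 2 * ih
  have hmt_closed : ∀ n, m * t n * (1 - m) ^ 2 = m ^ (n + 1) * (1 - m ^ (n + 1)) * (1 - m)
      + s2 * m ^ n * ((n + 1) * (1 - m) - (1 - m ^ (n + 1))) := by
    intro n
    induction n with
    | zero => rw [ht0]; ring
    | succ n ih => rw [ht]; push_cast; linear_combination m * ih + m * (1 - m) * hb_closed n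
  have hq_closed : ∀ n, q n * (1 - m) ^ 3
      = s2 * ((1 - m ^ (2 * n + 1)) - (2 * n + 1) * m ^ n * (1 - m))
        + (1 - m ^ (n + 1)) ^ 2 * (1 - m) := by
    intro n
    induction n with
    | zero => rw [hq0]; ring
    | succ n ih =>
      rw [hq]; push_cast
      linear_combination ih + 2 * (1 - m) * hmt_closed n + (1 - m) ^ 2 * hb_closed n
  have h1m : (1 - m) ^ 3 ≠ 0 := pow_ne_zero 3 (sub_ne_zero.mpr hm1.symm)
  rw [← mul_div_cancel_right₀ (q n) h1m, hq_closed n]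
  field_simp

structure IsGaltonWatson {Ω : Type*} [MeasurableSpace Ω] (P : Measure Ω)
    (ξ : ℕ → ℕ → Ω → ℕ) (Z : ℕ → Ω → ℕ) : Prop where
  measurable_offspring : ∀ n i, Measurable (ξ n i)
  map_offspring : ∀ n i, Measure.map (ξ n i) P = Measure.map (ξ 0 0) P
  iIndepFun_offspring : iIndepFun (Function.uncurry ξ) P
  zero : ∀ ω, Z 0 ω = 1
  succ : ∀ n ω, Z (n + 1) ω = ∑ i ∈ range (Z n ω), ξ n i ω

namespace GaltonWatson

variable {Ω : Type*}

abbrev history (ξ : ℕ → ℕ → Ω → ℕ) (n : ℕ) : MeasurableSpace Ω :=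
  sigmaOf (Function.uncurry ξ) {q | q.1 < n}

def totalProgeny (Z : ℕ → Ω → ℕ) (n : ℕ) (ω : Ω) : ℕ :=
  ∑ k ∈ range (n + 1), Z k ω

theorem totalProgeny_succ (Z : ℕ → Ω → ℕ) (n : ℕ) (ω : Ω) :
    totalProgeny Z (n + 1) ω = totalProgeny Z n ω + Z (n + 1) ω :=
  sum_range_succ _ _

end GaltonWatson

open GaltonWatson

namespace IsGaltonWatson

variable {Ω : Type*} [MeasurableSpace Ω] {P : Measure Ω} {ξ : ℕ → ℕ → Ω → ℕ} {Z : ℕ → Ω → ℕ}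

theorem history_le (h : IsGaltonWatson P ξ Z) (n : ℕ) : history ξ n ≤ ‹MeasurableSpace Ω› :=
  sigmaOf_le (X := Function.uncurry ξ) (fun q => h.measurable_offspring q.1 q.2) _

theorem measurable_Z_history (h : IsGaltonWatson P ξ Z) {k n : ℕ} (hkn : k ≤ n) :
    Measurable[history ξ n] (Z k) := by
  induction k with
  | zero => simp only [funext h.zero, measurable_const]
  | succ k ih =>
    simp only [funext (h.succ k)]
    exact (ih (by omega)).sum_range_random fun i =>
      measurable_sigmaOf (X := Function.uncurry ξ) (j := (k, i)) (by simpa using hkn)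

theorem measurable_Z (h : IsGaltonWatson P ξ Z) (n : ℕ) : Measurable (Z n) :=
  (h.measurable_Z_history le_rfl).mono (h.history_le n) le_rfl

theorem measurable_totalProgeny_history (h : IsGaltonWatson P ξ Z) (n : ℕ) :
    Measurable[history ξ n] (totalProgeny Z n) :=
  Finset.measurable_sum _ fun _ hk => h.measurable_Z_history (Nat.lt_succ_iff.mp (mem_range.mp hk))

theorem lintegral_offspring_mul (h : IsGaltonWatson P ξ Z) {T : Set (ℕ × ℕ)} {n i : ℕ}
    (hni : (n, i) ∉ T) (g : ℕ → ℝ≥0∞) {Y : Ω → ℝ≥0∞}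
    (hY : Measurable[sigmaOf (Function.uncurry ξ) T] Y) :
    ∫⁻ ω, g (ξ n i ω) * Y ω ∂P = (∫⁻ ω, g (ξ 0 0 ω) ∂P) * ∫⁻ ω, Y ω ∂P := by
  have hfactor := lintegral_comp_mul_eq_of_iIndepFun (X := Function.uncurry ξ) (P := P)
    (fun q => h.measurable_offspring q.1 q.2) h.iIndepFun_offspring hni (g := g)
    measurable_from_top hY
  rw [Function.uncurry_apply_pair] at hfactor
  rw [hfactor, ← lintegral_map measurable_from_top (h.measurable_offspring n i), h.map_offspring,
    lintegral_map measurable_from_top (h.measurable_offspring 0 0)]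

theorem lintegral_offspring_mul_offspring (h : IsGaltonWatson P ξ Z) {n : ℕ} {W : Ω → ℝ≥0∞}
    (hW : Measurable[history ξ n] W) (i j : ℕ) :
    ∫⁻ ω, ξ n i ω * ξ n j ω * W ω ∂P = (if i = j then ∫⁻ ω, (ξ 0 0 ω : ℝ≥0∞) ^ 2 ∂P
      else (∫⁻ ω, (ξ 0 0 ω : ℝ≥0∞) ∂P) ^ 2) * ∫⁻ ω, W ω ∂P := by
  split_ifs with hij
  · subst hij
    simp_rw [← sq]
    exact h.lintegral_offspring_mul (by simp) (fun a => (a : ℝ≥0∞) ^ 2) hW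
  · have hjW : Measurable[sigmaOf (Function.uncurry ξ) ({q | q.1 < n} ∪ {(n, j)})]
        fun ω => (ξ n j ω : ℝ≥0∞) * W ω :=
      ((measurable_from_top (f := fun a : ℕ => (a : ℝ≥0∞))).comp
        (measurable_sigmaOf (X := Function.uncurry ξ) (j := (n, j)) (by simp))).mul
        (hW.mono (sigmaOf_mono Set.subset_union_left) le_rfl)
    simp_rw [mul_assoc]
    rw [h.lintegral_offspring_mul (by simpa using hij) (fun a => (a : ℝ≥0∞)) hjW,
      h.lintegral_offspring_mul (by simp) (fun a => (a : ℝ≥0∞)) hW, sq, mul_assoc]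

theorem lintegral_mul_Z_succ (h : IsGaltonWatson P ξ Z) (n : ℕ) {Y : Ω → ℝ≥0∞}
    (hY : Measurable[history ξ n] Y) :
    ∫⁻ ω, Y ω * Z (n + 1) ω ∂P = (∫⁻ ω, (ξ 0 0 ω : ℝ≥0∞) ∂P) * ∫⁻ ω, Y ω * Z n ω ∂P := by
  set W : ℕ → Ω → ℝ≥0∞ := fun i ω => if i ∈ range (Z n ω) then Y ω else 0
  have hW : ∀ i, Measurable[history ξ n] (W i) := fun i =>
    Measurable.ite (h.measurable_Z_history le_rfl (.of_discrete (s := {z | i ∈ range z})))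
      hY measurable_const
  have hW' : ∀ i, Measurable (W i) := fun i => (hW i).mono (h.history_le n) le_rfl
  calc ∫⁻ ω, Y ω * Z (n + 1) ω ∂P = ∫⁻ ω, ∑' i, (ξ n i ω : ℝ≥0∞) * W i ω ∂P := by
        refine lintegral_congr fun ω => ?_
        rw [h.succ n ω, Nat.cast_sum, mul_sum, ← tsum_ite_mem]
        refine tsum_congr fun i => ?_
        simp only [W]
        split_ifs <;> simp [mul_comm]
    _ = ∑' i, ∫⁻ ω, (ξ n i ω : ℝ≥0∞) * W i ω ∂P :=
        lintegral_tsum fun i =>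
          ((measurable_from_top.comp (h.measurable_offspring n i)).mul (hW' i)).aemeasurable
    _ = ∑' i, (∫⁻ ω, (ξ 0 0 ω : ℝ≥0∞) ∂P) * ∫⁻ ω, W i ω ∂P :=
        tsum_congr fun i => h.lintegral_offspring_mul (by simp) _ (hW i)
    _ = (∫⁻ ω, (ξ 0 0 ω : ℝ≥0∞) ∂P) * ∫⁻ ω, Y ω * Z n ω ∂P := by
        rw [ENNReal.tsum_mul_left, ← lintegral_tsum fun i => (hW' i).aemeasurable]
        congr 1
        refine lintegral_congr fun ω => ?_
        simp only [W]
        rw [tsum_ite_mem, sum_const, card_range, nsmul_eq_mul, mul_comm]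

/- Both sides carry `m² E[Z_n]`, so that the identity needs no subtraction in `ℝ≥0∞`. -/
theorem lintegral_Z_succ_sq_add (h : IsGaltonWatson P ξ Z) (n : ℕ) :
    ∫⁻ ω, (Z (n + 1) ω : ℝ≥0∞) ^ 2 ∂P
        + (∫⁻ ω, (ξ 0 0 ω : ℝ≥0∞) ∂P) ^ 2 * ∫⁻ ω, (Z n ω : ℝ≥0∞) ∂P
      = (∫⁻ ω, (ξ 0 0 ω : ℝ≥0∞) ^ 2 ∂P) * ∫⁻ ω, (Z n ω : ℝ≥0∞) ∂P
        + (∫⁻ ω, (ξ 0 0 ω : ℝ≥0∞) ∂P) ^ 2 * ∫⁻ ω, (Z n ω : ℝ≥0∞) ^ 2 ∂P := by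
  set M := ∫⁻ ω, (ξ 0 0 ω : ℝ≥0∞) ∂P
  set Q := ∫⁻ ω, (ξ 0 0 ω : ℝ≥0∞) ^ 2 ∂P
  set W : ℕ × ℕ → Ω → ℝ≥0∞ := fun p ω => if p ∈ range (Z n ω) ×ˢ range (Z n ω) then 1 else 0
  set c : ℕ × ℕ → ℝ≥0∞ := fun p => if p.1 = p.2 then Q else M ^ 2
  have hW : ∀ p, Measurable[history ξ n] (W p) := fun p =>
    Measurable.ite
      (h.measurable_Z_history le_rfl (.of_discrete (s := {z | p ∈ range z ×ˢ range z})))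
      measurable_const measurable_const
  have hW' : ∀ p, Measurable (W p) := fun p => (hW p).mono (h.history_le n) le_rfl
  have hξ := h.measurable_offspring
  have hZ : Measurable fun ω => (Z n ω : ℝ≥0∞) := measurable_from_top.comp (h.measurable_Z n)
  have hcW : ∀ ω, ∑' p, c p * W p ω + M ^ 2 * Z n ω = Q * Z n ω + M ^ 2 * (Z n ω : ℝ≥0∞) ^ 2 := by
    intro ω
    simp only [W, mul_ite, mul_one, mul_zero, tsum_ite_mem]
    rw [mul_comm (M ^ 2), mul_comm Q, mul_comm (M ^ 2)]
    exact sum_range_product_ite_add _ _ _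
  calc ∫⁻ ω, (Z (n + 1) ω : ℝ≥0∞) ^ 2 ∂P + M ^ 2 * ∫⁻ ω, (Z n ω : ℝ≥0∞) ∂P
      = ∫⁻ ω, ∑' p, c p * W p ω ∂P + M ^ 2 * ∫⁻ ω, (Z n ω : ℝ≥0∞) ∂P := by
        simp_rw [h.succ n, Nat.cast_sum, sq_sum_range_eq_tsum]
        rw [lintegral_tsum fun p => (by fun_prop : Measurable fun ω =>
            (ξ n p.1 ω : ℝ≥0∞) * ξ n p.2 ω * W p ω).aemeasurable,
          lintegral_tsum fun p => (by fun_prop : Measurable fun ω => c p * W p ω).aemeasurable]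
        simp_rw [h.lintegral_offspring_mul_offspring (hW _), lintegral_const_mul _ (hW' _)]
        rfl
    _ = ∫⁻ ω, (Q * Z n ω + M ^ 2 * (Z n ω : ℝ≥0∞) ^ 2) ∂P := by
        rw [← lintegral_const_mul _ hZ, ← lintegral_add_left (by fun_prop)]
        exact lintegral_congr hcW
    _ = Q * ∫⁻ ω, (Z n ω : ℝ≥0∞) ∂P + M ^ 2 * ∫⁻ ω, (Z n ω : ℝ≥0∞) ^ 2 ∂P := by
        rw [lintegral_add_left (by fun_prop), lintegral_const_mul _ hZ,
          lintegral_const_mul _ (by fun_prop)]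

theorem integral_mul_Z_succ (h : IsGaltonWatson P ξ Z) (n : ℕ) {Y : Ω → ℕ}
    (hY : Measurable[history ξ n] Y) :
    ∫ ω, (Y ω : ℝ) * Z (n + 1) ω ∂P = (∫ ω, (ξ 0 0 ω : ℝ) ∂P) * ∫ ω, (Y ω : ℝ) * Z n ω ∂P := by
  have hYm : Measurable Y := hY.mono (h.history_le n) le_rfl
  simp_rw [← Nat.cast_mul]
  rw [integral_natCast_eq_toReal_lintegral (X := fun ω => Y ω * Z (n + 1) ω)
      (hYm.mul (h.measurable_Z _)),
    integral_natCast_eq_toReal_lintegral (X := fun ω => Y ω * Z n ω) (hYm.mul (h.measurable_Z _)),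
    integral_natCast_eq_toReal_lintegral (h.measurable_offspring 0 0), ← ENNReal.toReal_mul]
  push_cast
  rw [h.lintegral_mul_Z_succ n (Y := fun ω => (Y ω : ℝ≥0∞)) (measurable_from_top.comp hY)]

theorem integral_Z [IsProbabilityMeasure P] (h : IsGaltonWatson P ξ Z) (n : ℕ) :
    ∫ ω, (Z n ω : ℝ) ∂P = (∫ ω, (ξ 0 0 ω : ℝ) ∂P) ^ n := by
  induction n with
  | zero => simp [h.zero]
  | succ n ih =>
    simpa [ih, pow_succ, mul_comm] using h.integral_mul_Z_succ n (Y := fun _ => 1) measurable_const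

theorem lintegral_Z_sq_ne_top [IsProbabilityMeasure P] (h : IsGaltonWatson P ξ Z)
    (hQ : ∫⁻ ω, (ξ 0 0 ω : ℝ≥0∞) ^ 2 ∂P ≠ ⊤) (n : ℕ) :
    ∫⁻ ω, (Z n ω : ℝ≥0∞) ^ 2 ∂P ≠ ⊤ := by
  induction n with
  | zero => simp [h.zero]
  | succ n ih =>
    have hM := ne_top_of_le_ne_top hQ (lintegral_natCast_le_lintegral_sq (ξ 0 0))
    refine ne_top_of_le_ne_top ?_ (le_self_add.trans_eq (h.lintegral_Z_succ_sq_add n))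
    exact ENNReal.add_ne_top.2 ⟨ENNReal.mul_ne_top hQ (ne_top_of_le_ne_top ih
      (lintegral_natCast_le_lintegral_sq _)), ENNReal.mul_ne_top (ENNReal.pow_ne_top hM) ih⟩

theorem memLp_Z [IsProbabilityMeasure P] (h : IsGaltonWatson P ξ Z)
    (hQ : ∫⁻ ω, (ξ 0 0 ω : ℝ≥0∞) ^ 2 ∂P ≠ ⊤) (n : ℕ) :
    MemLp (fun ω => (Z n ω : ℝ)) 2 P :=
  memLp_two_natCast (h.measurable_Z n) (h.lintegral_Z_sq_ne_top hQ n)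

theorem integral_Z_succ_sq [IsProbabilityMeasure P] (h : IsGaltonWatson P ξ Z)
    (hQ : ∫⁻ ω, (ξ 0 0 ω : ℝ≥0∞) ^ 2 ∂P ≠ ⊤) (n : ℕ) :
    ∫ ω, (Z (n + 1) ω : ℝ) ^ 2 ∂P + (∫ ω, (ξ 0 0 ω : ℝ) ∂P) ^ 2 * ∫ ω, (Z n ω : ℝ) ∂P
      = (∫ ω, (ξ 0 0 ω : ℝ) ^ 2 ∂P) * ∫ ω, (Z n ω : ℝ) ∂P
        + (∫ ω, (ξ 0 0 ω : ℝ) ∂P) ^ 2 * ∫ ω, (Z n ω : ℝ) ^ 2 ∂P := by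
  have hM := ne_top_of_le_ne_top hQ (lintegral_natCast_le_lintegral_sq (ξ 0 0))
  have hZ := h.lintegral_Z_sq_ne_top hQ n
  have hZ' := ne_top_of_le_ne_top hZ (lintegral_natCast_le_lintegral_sq (Z n))
  have e := congrArg ENNReal.toReal (h.lintegral_Z_succ_sq_add n)
  rw [ENNReal.toReal_add (h.lintegral_Z_sq_ne_top hQ (n + 1))
      (ENNReal.mul_ne_top (ENNReal.pow_ne_top hM) hZ'),
    ENNReal.toReal_add (ENNReal.mul_ne_top hQ hZ') (ENNReal.mul_ne_top (ENNReal.pow_ne_top hM) hZ)]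
    at e
  simp only [ENNReal.toReal_mul, ENNReal.toReal_pow] at e
  simp_rw [← Nat.cast_pow]
  simp only [integral_natCast_eq_toReal_lintegral (h.measurable_Z _),
    integral_natCast_eq_toReal_lintegral ((h.measurable_Z _).pow_const 2),
    integral_natCast_eq_toReal_lintegral (h.measurable_offspring 0 0),
    integral_natCast_eq_toReal_lintegral ((h.measurable_offspring 0 0).pow_const 2)]
  push_cast
  exact e

theorem memLp_totalProgeny [IsProbabilityMeasure P] (h : IsGaltonWatson P ξ Z)
    (hQ : ∫⁻ ω, (ξ 0 0 ω : ℝ≥0∞) ^ 2 ∂P ≠ ⊤) (n : ℕ) :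
    MemLp (fun ω => (totalProgeny Z n ω : ℝ)) 2 P := by
  simp only [totalProgeny, Nat.cast_sum]
  exact memLp_finsetSum _ fun k _ => h.memLp_Z hQ k

theorem integral_totalProgeny_mul_Z_succ [IsProbabilityMeasure P] (h : IsGaltonWatson P ξ Z)
    (hQ : ∫⁻ ω, (ξ 0 0 ω : ℝ≥0∞) ^ 2 ∂P ≠ ⊤) (n : ℕ) :
    ∫ ω, (totalProgeny Z (n + 1) ω : ℝ) * Z (n + 1) ω ∂P
      = (∫ ω, (ξ 0 0 ω : ℝ) ∂P) * ∫ ω, (totalProgeny Z n ω : ℝ) * Z n ω ∂P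
        + ∫ ω, (Z (n + 1) ω : ℝ) ^ 2 ∂P := by
  simp_rw [totalProgeny_succ, Nat.cast_add, add_mul, ← sq]
  rw [integral_add, h.integral_mul_Z_succ n (h.measurable_totalProgeny_history n)]
  · exact (h.memLp_totalProgeny hQ n).integrable_mul (h.memLp_Z hQ (n + 1))
  · exact (h.memLp_Z hQ (n + 1)).integrable_sq

theorem integral_totalProgeny_sq_succ [IsProbabilityMeasure P] (h : IsGaltonWatson P ξ Z)
    (hQ : ∫⁻ ω, (ξ 0 0 ω : ℝ≥0∞) ^ 2 ∂P ≠ ⊤) (n : ℕ) :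
    ∫ ω, (totalProgeny Z (n + 1) ω : ℝ) ^ 2 ∂P
      = ∫ ω, (totalProgeny Z n ω : ℝ) ^ 2 ∂P
        + 2 * (∫ ω, (ξ 0 0 ω : ℝ) ∂P) * ∫ ω, (totalProgeny Z n ω : ℝ) * Z n ω ∂P
        + ∫ ω, (Z (n + 1) ω : ℝ) ^ 2 ∂P := by
  have hT := h.memLp_totalProgeny hQ n
  have hZ := h.memLp_Z hQ (n + 1)
  have hexp : ∀ ω, (totalProgeny Z (n + 1) ω : ℝ) ^ 2 = (totalProgeny Z n ω : ℝ) ^ 2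
      + 2 * ((totalProgeny Z n ω : ℝ) * Z (n + 1) ω) + (Z (n + 1) ω : ℝ) ^ 2 := fun ω => by
    rw [totalProgeny_succ, Nat.cast_add]; ring
  have hTZ : Integrable (fun ω => (totalProgeny Z n ω : ℝ) * Z (n + 1) ω) P :=
    hT.integrable_mul hZ
  simp_rw [hexp]
  rw [integral_add, integral_add, integral_const_mul,
    h.integral_mul_Z_succ n (h.measurable_totalProgeny_history n), mul_assoc]
  · exact hT.integrable_sq
  · exact hTZ.const_mul 2
  · exact hT.integrable_sq.add (hTZ.const_mul 2)
  · exact hZ.integrable_sq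

end IsGaltonWatson

/-- Second moment of the total progeny `T_R = ∑_{n=0}^{R} Z_n` of a Galton-Watson
process with offspring mean `m ≠ 1` and offspring variance `s²`. -/
theorem total_progeny_second_moment {Ω : Type*} [MeasurableSpace Ω] (P : Measure Ω)
    [IsProbabilityMeasure P] (m s2 : ℝ) (hm1 : m ≠ 1) (R : ℕ)
    (ξ : ℕ → ℕ → Ω → ℕ) (Z : ℕ → Ω → ℕ)
    (hξmeas : ∀ n i, Measurable (ξ n i))
    (hξident : ∀ n i, Measure.map (ξ n i) P = Measure.map (ξ 0 0) P)
    (hξsq : MemLp (fun ω => (ξ 0 0 ω : ℝ)) 2 P)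
    (hξmean : ∫ ω, (ξ 0 0 ω : ℝ) ∂P = m)
    (hξvar : variance (fun ω => (ξ 0 0 ω : ℝ)) P = s2)
    (hξindep : iIndepFun (fun q : ℕ × ℕ => ξ q.1 q.2) P)
    (hZ0 : ∀ ω, Z 0 ω = 1)
    (hZrec : ∀ n ω, Z (n + 1) ω = ∑ i ∈ Finset.range (Z n ω), ξ n i ω) :
    ∫ ω, (∑ n ∈ Finset.range (R + 1), (Z n ω : ℝ)) ^ 2 ∂P
      = s2 / (1 - m) ^ 2 * ((1 - m ^ (2 * R + 1)) / (1 - m) - (2 * (R : ℝ) + 1) * m ^ R)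
        + ((1 - m ^ (R + 1)) / (1 - m)) ^ 2 := by
  have h : IsGaltonWatson P ξ Z := ⟨hξmeas, hξident, hξindep, hZ0, hZrec⟩
  have hQ : ∫⁻ ω, (ξ 0 0 ω : ℝ≥0∞) ^ 2 ∂P ≠ ⊤ := by
    simpa [ENNReal.ofReal_pow] using hξsq.integrable_sq.lintegral_lt_top.ne
  have hsq : ∫ ω, (ξ 0 0 ω : ℝ) ^ 2 ∂P = s2 + m ^ 2 := by
    have := variance_eq_sub hξsq
    simp only [Pi.pow_apply, hξvar, hξmean] at this
    linarith
  have key := progeny_moments_eq_of_recurrence (s2 := s2) hm1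
    (b := fun n => ∫ ω, (Z n ω : ℝ) ^ 2 ∂P)
    (t := fun n => ∫ ω, (totalProgeny Z n ω : ℝ) * Z n ω ∂P)
    (q := fun n => ∫ ω, (totalProgeny Z n ω : ℝ) ^ 2 ∂P)
    (by simp [hZ0]) (fun n => ?_) (by simp [totalProgeny, hZ0]) (fun n => ?_)
    (by simp [totalProgeny, hZ0]) (fun n => ?_) R
  · simpa [totalProgeny] using key
  · have hb := h.integral_Z_succ_sq hQ n
    rw [h.integral_Z, hsq, hξmean] at hb
    linear_combination hb
  · simpa [hξmean] using h.integral_totalProgeny_mul_Z_succ hQ n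
  · simpa [hξmean] using h.integral_totalProgeny_sq_succ hQ n
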